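/- arXiv:1906.02574 — 6 statements merged into one kernel-verified Lean document; each statement's English description precedes it below -/
import Mathlib

section
/- For any integers x, y ≥ 3 and a ≤ x/2, b ≤ y/2, except the case x = y = 4 and a = b = 2, we have C(x,a)·C(y,b) ≤ C(x+y-1, a+b). -/
open scoped BigOperators RealInnerProductSpace
open Filter

noncomputable section

abbrev Pt (d : ℕ) := EuclideanSpace ℝ (Fin d)

def Separated {d : ℕ} (S : Finset (Pt d)) : Prop :=
  ∀ p ∈ S, ∀ q ∈ S, p ≠ q → 1 ≤ dist p q

def IsKDistSet {d : ℕ} (k : ℕ) (S : Finset (Pt d)) : Prop :=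
  ∃ D : Finset ℝ, D.card ≤ k ∧ ∀ p ∈ S, ∀ q ∈ S, p ≠ q → dist p q ∈ D

def mDist (k d : ℕ) : ℕ :=
  sSup {n : ℕ | ∃ S : Finset (Pt d), S.card = n ∧ IsKDistSet k S}

def IsNearlyKDist {d : ℕ} (k : ℕ) (ε : ℝ) (S : Finset (Pt d)) : Prop :=
  Separated S ∧ ∃ t : ℕ → ℝ, (∀ i < k, 1 ≤ t i) ∧
    ∀ p ∈ S, ∀ q ∈ S, p ≠ q → ∃ i < k, dist p q ∈ Set.Icc (t i) (t i + ε)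

def Mnear (k d : ℕ) : ℕ :=
  sSup {M : ℕ | ∀ ε : ℝ, 0 < ε → ∃ S : Finset (Pt d), S.card = M ∧ IsNearlyKDist k ε S}

def vsAngle {d : ℕ} (v : Pt d) (Λ : Submodule ℝ (Pt d)) : ℝ :=
  sInf {θ : ℝ | ∃ w ∈ Λ, w ≠ 0 ∧ θ = InnerProductGeometry.angle v w}

def IsFlatAt {d : ℕ} (S : Finset (Pt d)) (p : Pt d) (j : ℕ) (α : ℝ) : Prop :=
  ∃ Λ : Submodule ℝ (Pt d), Module.finrank ℝ Λ = j ∧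
    ∀ q ∈ S, q ≠ p → vsAngle (p - q) Λ ≤ α

def Nflat (k d' d : ℕ) : ℕ :=
  sSup {N : ℕ | ∀ ε α : ℝ, 0 < ε → 0 < α →
    ∃ S : Finset (Pt d'), S.card = N ∧ IsNearlyKDist k ε S ∧ ∀ p ∈ S, IsFlatAt S p d α}

def turanNum (n s : ℕ) : ℕ :=
  n.choose 2 - ((n % s) * (n / s + 1).choose 2 + (s - n % s) * (n / s).choose 2)

open Classical in
def nearPairs {d : ℕ} (S : Finset (Pt d)) (k : ℕ) (ε : ℝ) (t : ℕ → ℝ) :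
    Finset (Pt d × Pt d) :=
  S.offDiag.filter (fun pq => ∃ i < k, dist pq.1 pq.2 ∈ Set.Icc (t i) (t i + ε))

def Mkdn (k d n : ℕ) : ℕ :=
  sSup {M : ℕ | ∃ (S : Finset (Pt d)) (t : ℕ → ℝ), S.card = n ∧ Separated S ∧
    (∀ i < k, 1 ≤ t i) ∧ (nearPairs S k 1 t).card = 2 * M}

/-
Split off one element of the x-set with Pascal's rule:
`C(x, a) C(y, b) = C(x-1, a) C(y, b) + C(x-1, a-1) C(y, b)`. When `2b < y` the factor `C(y, b)` of the
second term may be raised to `C(y, b+1)`, and the two resulting products are distinct terms of the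
Vandermonde sum for `C(x-1+y, a+b)`. In the balanced case `x = 2a`, `y = 2b` this fails; there the
three middle terms of the Vandermonde sum for `C(2a+2b, a+b) = 2 C(2a+2b-1, a+b)` are
`C(2a, a) C(2b, b)` and twice `C(2a, a-1) C(2b, b-1)`, and the ratio
`C(2a, a) C(2b, b) / (C(2a, a-1) C(2b, b-1)) = (a+1)(b+1) / (ab)` is at most `2` for `a, b ≥ 2` except when `a = b = 2`.
-/

namespace Nat

open Finset

theorem sum_choose_mul_choose_le_of_subset_antidiagonal (m n k : ℕ) {s : Finset (ℕ × ℕ)}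
    (hs : s ⊆ antidiagonal k) :
    ∑ p ∈ s, m.choose p.1 * n.choose p.2 ≤ (m + n).choose k := by
  rw [add_choose_eq]
  exact sum_le_sum_of_subset hs

theorem choose_le_choose_succ_of_two_mul_lt {n k : ℕ} (h : 2 * k < n) :
    n.choose k ≤ n.choose (k + 1) := by
  refine Nat.le_of_mul_le_mul_right ?_ (show 0 < k + 1 by omega)
  rw [choose_succ_right_eq]
  exact Nat.mul_le_mul_left _ (by omega)

theorem choose_mul_choose_le_of_two_mul_lt {m n : ℕ} (a b : ℕ) (hm : 0 < m) (hb : 2 * b < n) :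
    m.choose a * n.choose b ≤ (m + n - 1).choose (a + b) := by
  obtain ⟨m, rfl⟩ : ∃ k, m = k + 1 := ⟨m - 1, by omega⟩
  rw [show m + 1 + n - 1 = m + n by omega]
  rcases a with _ | a
  · simpa using choose_le_choose b (by omega : n ≤ m + n)
  have hvand : m.choose (a + 1) * n.choose b + m.choose a * n.choose (b + 1)
      ≤ (m + n).choose (a + 1 + b) := by
    have hs : {(a + 1, b), (a, b + 1)} ⊆ antidiagonal (a + 1 + b) := by
      simp only [insert_subset_iff, singleton_subset_iff, HasAntidiagonal.mem_antidiagonal,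
        true_and]
      omega
    simpa [sum_pair] using sum_choose_mul_choose_le_of_subset_antidiagonal m n _ hs
  calc (m + 1).choose (a + 1) * n.choose b
      = m.choose (a + 1) * n.choose b + m.choose a * n.choose b := by
        rw [choose_succ_succ']; ring
    _ ≤ m.choose (a + 1) * n.choose b + m.choose a * n.choose (b + 1) := by
        gcongr; exact choose_le_choose_succ_of_two_mul_lt hb
    _ ≤ (m + n).choose (a + 1 + b) := hvand

theorem choose_two_mul_mul_self {a : ℕ} (ha : 0 < a) :
    (2 * a).choose a * a = (2 * a).choose (a - 1) * (a + 1) := by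
  obtain ⟨a, rfl⟩ : ∃ c, a = c + 1 := ⟨a - 1, by omega⟩
  rw [add_tsub_cancel_right, choose_succ_right_eq]
  congr 2
  omega

theorem choose_two_mul_succ {a : ℕ} (ha : 0 < a) :
    (2 * a).choose (a + 1) = (2 * a).choose (a - 1) := by
  rw [← choose_symm (by omega : a + 1 ≤ 2 * a)]
  congr 1
  omega

theorem choose_two_mul_eq_two_mul_choose_pred {c : ℕ} (hc : 0 < c) :
    (2 * c).choose c = 2 * (2 * c - 1).choose c := by
  obtain ⟨c, rfl⟩ : ∃ n, c = n + 1 := ⟨c - 1, by omega⟩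
  rw [show 2 * (c + 1) = 2 * c + 1 + 1 by ring, add_tsub_cancel_right, choose_succ_succ',
    choose_symm_half]
  ring

theorem choose_two_mul_mul_choose_two_mul_le {a b : ℕ} (hab : (a + 1) * (b + 1) ≤ 2 * (a * b)) :
    (2 * a).choose a * (2 * b).choose b ≤ (2 * a + 2 * b - 1).choose (a + b) := by
  have ha : 0 < a := Nat.pos_of_ne_zero (by rintro rfl; simp at hab)
  have hb : 0 < b := Nat.pos_of_ne_zero (by rintro rfl; simp at hab)
  have hvand : (2 * a).choose (a - 1) * (2 * b).choose (b - 1) + (2 * a).choose a * (2 * b).choose b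
      + (2 * a).choose (a - 1) * (2 * b).choose (b - 1) ≤ (2 * a + 2 * b).choose (a + b) := by
    have hs : {(a - 1, b + 1), (a, b), (a + 1, b - 1)} ⊆ antidiagonal (a + b) := by
      simp only [insert_subset_iff, singleton_subset_iff, HasAntidiagonal.mem_antidiagonal,
        true_and]
      omega
    have h := sum_choose_mul_choose_le_of_subset_antidiagonal (2 * a) (2 * b) _ hs
    rw [sum_insert (by simp), sum_pair (by simp)] at h
    dsimp only at h
    rw [choose_two_mul_succ ha, choose_two_mul_succ hb] at h
    linarith
  have hhalf := choose_two_mul_eq_two_mul_choose_pred (c := a + b) (by omega)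
  rw [mul_add] at hhalf
  set A := (2 * a).choose a
  set B := (2 * b).choose b
  set A' := (2 * a).choose (a - 1)
  set B' := (2 * b).choose (b - 1)
  have hratio : A * B ≤ 2 * (A' * B') := by
    refine Nat.le_of_mul_le_mul_right (c := (a + 1) * (b + 1)) ?_ (by positivity)
    calc A * B * ((a + 1) * (b + 1)) ≤ A * B * (2 * (a * b)) := by gcongr
      _ = 2 * ((A * a) * (B * b)) := by ring
      _ = 2 * (A' * B') * ((a + 1) * (b + 1)) := by
        rw [choose_two_mul_mul_self ha, choose_two_mul_mul_self hb]; ring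
  omega

end Nat

theorem stmt0 (x y a b : ℕ) (hx : 3 ≤ x) (hy : 3 ≤ y)
    (ha : 2 * a ≤ x) (hb : 2 * b ≤ y)
    (hexc : ¬ (x = 4 ∧ y = 4 ∧ a = 2 ∧ b = 2)) :
    x.choose a * y.choose b ≤ (x + y - 1).choose (a + b) := by
  rcases hb.lt_or_eq with hb | rfl
  · exact Nat.choose_mul_choose_le_of_two_mul_lt a b (by omega) hb
  rcases ha.lt_or_eq with ha | rfl
  · rw [mul_comm, add_comm x, add_comm a]
    exact Nat.choose_mul_choose_le_of_two_mul_lt b a (by omega) ha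
  refine Nat.choose_two_mul_mul_choose_two_mul_le ?_
  have h2a : 2 ≤ a := by omega
  have h2b : 2 ≤ b := by omega
  have hne : 3 ≤ a ∨ 3 ≤ b := by omega
  rcases hne with h | h <;> nlinarith

end
end

section
/- Let S be a finite set of points in ℝ^d, and suppose every unordered pair of distinct points of S is colored red or blue such that the distance between the points of any blue pair is strictly more than 3 times the distance between the points of any red pair. If B is a blue clique of maximum size (a subset of S all of whose pairs are blue), then S can be partitioned into |B| sets R_1, …, R_{|B|} such that: (1) each R_i is a red clique (all pairs within R_i are red); (2) each R_i contains exactly one vertex of B; and (3) for any p ∈ R_i and q ∈ R_j with i ≠ j, the pair {p,q} is blue. -/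
open scoped BigOperators RealInnerProductSpace
open Filter

noncomputable section

open Classical in
theorem stmt1 (d : ℕ) (S : Finset (Pt d)) (red : Pt d → Pt d → Prop)
    (hsymm : ∀ p q, red p q → red q p)
    (hsep : ∀ p ∈ S, ∀ q ∈ S, ∀ r ∈ S, ∀ s ∈ S,
      p ≠ q → r ≠ s → ¬ red p q → red r s → 3 * dist r s < dist p q)
    (B : Finset (Pt d)) (hBS : B ⊆ S)
    (hBblue : ∀ p ∈ B, ∀ q ∈ B, p ≠ q → ¬ red p q)
    (hBmax : ∀ B' ⊆ S, (∀ p ∈ B', ∀ q ∈ B', p ≠ q → ¬ red p q) → B'.card ≤ B.card) :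
    ∃ R : Pt d → Finset (Pt d),
      (∀ b ∈ B, R b ⊆ S) ∧
      (∀ p ∈ S, ∃! b, b ∈ B ∧ p ∈ R b) ∧
      (∀ b ∈ B, ∀ p ∈ R b, ∀ q ∈ R b, p ≠ q → red p q) ∧
      (∀ b ∈ B, b ∈ R b ∧ R b ∩ B = {b}) ∧
      (∀ b₁ ∈ B, ∀ b₂ ∈ B, b₁ ≠ b₂ → ∀ p ∈ R b₁, ∀ q ∈ R b₂, ¬ red p q) := by
  classical
  -- uniqueness of the red neighbour in B
  have huniq : ∀ p ∈ S, ∀ b₁ ∈ B, ∀ b₂ ∈ B, red p b₁ → red p b₂ → p ≠ b₁ → p ≠ b₂ → b₁ = b₂ := by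
    intro p hpS b₁ hb₁ b₂ hb₂ h1 h2 hne1 hne2
    by_contra hne
    have hblue : ¬ red b₁ b₂ := hBblue b₁ hb₁ b₂ hb₂ hne
    have d1 : 3 * dist p b₁ < dist b₁ b₂ :=
      hsep b₁ (hBS hb₁) b₂ (hBS hb₂) p hpS b₁ (hBS hb₁) hne hne1 hblue h1
    have d2 : 3 * dist p b₂ < dist b₁ b₂ :=
      hsep b₁ (hBS hb₁) b₂ (hBS hb₂) p hpS b₂ (hBS hb₂) hne hne2 hblue h2
    have tri : dist b₁ b₂ ≤ dist b₁ p + dist p b₂ := dist_triangle _ _ _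
    have hc : dist b₁ p = dist p b₁ := dist_comm _ _
    have hpos : 0 < dist b₁ b₂ := dist_pos.2 hne
    linarith
  refine ⟨fun b => S.filter (fun p => p = b ∨ (p ∉ B ∧ red p b)), ?_, ?_, ?_, ?_, ?_⟩
  · intro b _; exact Finset.filter_subset _ _
  · -- exactly one b
    intro p hpS
    by_cases hpB : p ∈ B
    · refine ⟨p, ⟨hpB, Finset.mem_filter.2 ⟨hpS, Or.inl rfl⟩⟩, ?_⟩
      rintro b ⟨hbB, hb⟩
      rcases (Finset.mem_filter.1 hb).2 with h | ⟨h, _⟩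
      · exact h.symm
      · exact absurd hpB h
    · -- existence: some b ∈ B with red p b
      have hex : ∃ b ∈ B, red p b := by
        by_contra hno
        push_neg at hno
        have hsub : insert p B ⊆ S := Finset.insert_subset hpS hBS
        have hblue : ∀ x ∈ insert p B, ∀ y ∈ insert p B, x ≠ y → ¬ red x y := by
          intro x hx y hy hxy
          rcases Finset.mem_insert.1 hx with rfl | hx
          · rcases Finset.mem_insert.1 hy with rfl | hy
            · exact absurd rfl hxy
            · exact fun h => hno y hy (h)
          · rcases Finset.mem_insert.1 hy with hyp | hy
            · exact fun h => hno x hx (hsymm _ _ (hyp ▸ h))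
            · exact hBblue x hx y hy hxy
        have := hBmax _ hsub hblue
        rw [Finset.card_insert_of_notMem hpB] at this
        omega
      obtain ⟨b, hbB, hred⟩ := hex
      have hpb : p ≠ b := fun h => hpB (h ▸ hbB)
      refine ⟨b, ⟨hbB, Finset.mem_filter.2 ⟨hpS, Or.inr ⟨hpB, hred⟩⟩⟩, ?_⟩
      rintro b' ⟨hb'B, hb'⟩
      rcases (Finset.mem_filter.1 hb').2 with h | ⟨_, hred'⟩
      · exact absurd (h ▸ hb'B) hpB
      · exact huniq p hpS b' hb'B b hbB hred' hred (fun h => hpB (h ▸ hb'B)) hpb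
  · -- red cliques
    intro b hbB p hp q hq hpq
    obtain ⟨hpS, hp⟩ := Finset.mem_filter.1 hp
    obtain ⟨hqS, hq⟩ := Finset.mem_filter.1 hq
    rcases hp with rfl | ⟨hpB, hpr⟩
    · rcases hq with rfl | ⟨hqB, hqr⟩
      · exact absurd rfl hpq
      · exact hsymm _ _ hqr
    · rcases hq with rfl | ⟨hqB, hqr⟩
      · exact hpr
      · by_contra hblue
        have hpb : p ≠ b := fun h => hpB (h ▸ hbB)
        have hqb : q ≠ b := fun h => hqB (h ▸ hbB)
        have hbS := hBS hbB
        have d1 : 3 * dist p b < dist p q := hsep p hpS q hqS p hpS b hbS hpq hpb hblue hpr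
        have d2 : 3 * dist q b < dist p q := hsep p hpS q hqS q hqS b hbS hpq hqb hblue hqr
        have tri : dist p q ≤ dist p b + dist b q := dist_triangle _ _ _
        have hc : dist b q = dist q b := dist_comm _ _
        have hpos : 0 < dist p q := dist_pos.2 hpq
        linarith
  · -- b ∈ R b and R b ∩ B = {b}
    intro b hbB
    constructor
    · exact Finset.mem_filter.2 ⟨hBS hbB, Or.inl rfl⟩
    · ext x
      simp only [Finset.mem_inter, Finset.mem_filter, Finset.mem_singleton]
      constructor
      · rintro ⟨⟨hxS, h | ⟨hxB, _⟩⟩, hxB'⟩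
        · exact h
        · exact absurd hxB' hxB
      · rintro rfl
        exact ⟨⟨hBS hbB, Or.inl rfl⟩, hbB⟩
  · -- cross pairs are blue
    intro b₁ hb₁ b₂ hb₂ hne p hp q hq hred
    obtain ⟨hpS, hp⟩ := Finset.mem_filter.1 hp
    obtain ⟨hqS, hq⟩ := Finset.mem_filter.1 hq
    have hblue : ¬ red b₁ b₂ := hBblue b₁ hb₁ b₂ hb₂ hne
    have hb₁S := hBS hb₁
    have hb₂S := hBS hb₂
    have hpos : 0 < dist b₁ b₂ := dist_pos.2 hne
    -- p ≠ q
    have hpq : p ≠ q := by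
      rintro rfl
      rcases hp with rfl | ⟨hpB, hpr⟩
      · rcases hq with h | ⟨hqB, _⟩
        · exact hne h
        · exact hqB hb₁
      · rcases hq with rfl | ⟨_, hqr⟩
        · exact hpB hb₂
        · exact hne (huniq p hpS b₁ hb₁ b₂ hb₂ hpr hqr
            (fun h => hpB (h ▸ hb₁)) (fun h => hpB (h ▸ hb₂)))
    have d1 : 3 * dist p q < dist b₁ b₂ :=
      hsep b₁ hb₁S b₂ hb₂S p hpS q hqS hne hpq hblue hred
    have t1 : 3 * dist b₁ p ≤ dist b₁ b₂ := by
      rcases hp with rfl | ⟨hpB, hpr⟩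
      · simp [dist_self]
      · have hpb : p ≠ b₁ := fun h => hpB (h ▸ hb₁)
        have := hsep b₁ hb₁S b₂ hb₂S p hpS b₁ hb₁S hne hpb hblue hpr
        have hc : dist b₁ p = dist p b₁ := dist_comm _ _
        linarith
    have t2 : 3 * dist q b₂ ≤ dist b₁ b₂ := by
      rcases hq with rfl | ⟨hqB, hqr⟩
      · simp [dist_self]
      · have hqb : q ≠ b₂ := fun h => hqB (h ▸ hb₂)
        have := hsep b₁ hb₁S b₂ hb₂S q hqS b₂ hb₂S hne hqb hblue hqr
        linarith
    have tri1 : dist b₁ b₂ ≤ dist b₁ p + dist p b₂ := dist_triangle _ _ _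
    have tri2 : dist p b₂ ≤ dist p q + dist q b₂ := dist_triangle _ _ _
    linarith


end
end

section
/- M'_k(d) ≤ M_k(d) for all k, d ≥ 1: given any partition k = k_1 + … + k_s and d = d_1 + … + d_s, and k_i-distance sets S_i ⊂ ℝ^{d_i} of cardinality m_{k_i}(d_i), for every ε > 0 one can scale the sets so that the product set S_1 × … × S_s ⊂ ℝ^d is an ε-nearly k-distance set of cardinality ∏ m_{k_i}(d_i). -/
/-! In `S₁ × c • S₂` (with the ℓ² product metric), where `S₁` is an ε-nearly `k₁`-distance set
and `S₂` a `k₂`-distance set, two points differing in the second factor are at distance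
`√(D² + (c v)²) ∈ [c v, c v + ε]` as soon as `c v ≥ diam(S₁)² / 2ε`; so for large `c` the product
is an ε-nearly `(k₁ + k₂)`-distance set, and one inducts over the factors.

Since `Mnear` is a supremum in `ℕ`, one also needs nearly `k`-distance sets to have bounded size:
by a multicolour Ramsey argument a huge one contains a large subset with all distances in a single
`[a, a + 1]`, `a ≥ 1`, which a packing argument in a ball of radius `2a` rules out. -/

open scoped BigOperators RealInnerProductSpace
open Filter

noncomputable section

def Mprime (k d : ℕ) : ℕ :=
  sSup {P : ℕ | ∃ (s : ℕ) (ks ds : Fin s → ℕ), 0 < s ∧ (∀ i, 1 ≤ ks i) ∧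
    (∑ i, ks i) = k ∧ (∑ i, ds i) = d ∧ P = ∏ i, mDist (ks i) (ds i)}

theorem card_le_pred_of_forall_rel {α : Type*} [DecidableEq α] {r : α → α → Prop}
    (hr : ∀ p q, r p q → r q p) {S A : Finset α} {x : α} {b : ℕ} (hx : x ∈ S)
    (hAS : A ⊆ S.erase x) (hAx : ∀ y ∈ A, r x y)
    (hb : ∀ T ⊆ S, (T : Set α).Pairwise r → T.card ≤ b) :
    ∀ T ⊆ A, (T : Set α).Pairwise r → T.card ≤ b - 1 := by
  intro T hTA hT
  have hxT : x ∉ T := fun h => by simpa using hAS (hTA h)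
  have hins : (insert x T : Set α).Pairwise r :=
    hT.insert fun y hy _ => ⟨hAx y (hTA hy), hr x y (hAx y (hTA hy))⟩
  have := hb (insert x T) (Finset.insert_subset hx ((hTA.trans hAS).trans (S.erase_subset x)))
    (by simpa using hins)
  rw [Finset.card_insert_of_notMem hxT] at this
  omega

/-- Multicolour Ramsey bound; a pair may carry several colours. -/
theorem card_le_pow_of_monochromatic_card_le {α ι : Type*} [DecidableEq α]
    (R : ι → α → α → Prop) (hR : ∀ i p q, R i p q → R i q p) (I : Finset ι) (b : ι → ℕ)
    (S : Finset α) (hS : (S : Set α).Pairwise fun p q => ∃ i ∈ I, R i p q)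
    (hb : ∀ i ∈ I, ∀ T ⊆ S, (T : Set α).Pairwise (R i) → T.card ≤ b i) :
    S.card ≤ (I.card + 1) ^ ∑ i ∈ I, b i := by
  classical
  obtain ⟨n, hn⟩ : ∃ n, ∑ i ∈ I, b i = n := ⟨_, rfl⟩
  rw [hn]
  induction n generalizing b S with
  | zero =>
    refine Finset.card_le_one.2 fun p hp q hq => by_contra fun hpq => ?_
    obtain ⟨i, hi, -⟩ := hS hp hq hpq
    have h1 : 1 ≤ b i := by simpa using hb i hi {p} (by simpa using hp) (by simp)
    have h2 : b i ≤ ∑ j ∈ I, b j := Finset.single_le_sum (fun _ _ => Nat.zero_le _) hi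
    omega
  | succ n ih =>
    obtain rfl | ⟨x, hx⟩ := S.eq_empty_or_nonempty
    · simp
    -- Split the other points by their colour towards `x`; within the `i`-th class the
    -- budget of colour `i` drops by one, since `x` extends every `i`-monochromatic set.
    set A : ι → Finset α := fun i => (S.erase x).filter (R i x)
    have hcover : S.erase x ⊆ I.biUnion A := by
      intro y hy
      obtain ⟨hyx, hyS⟩ := Finset.mem_erase.1 hy
      obtain ⟨i, hi, hxy⟩ := hS hx hyS (Ne.symm hyx)
      exact Finset.mem_biUnion.2 ⟨i, hi, Finset.mem_filter.2 ⟨hy, hxy⟩⟩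
    have hA : ∀ i ∈ I, (A i).card ≤ (I.card + 1) ^ n := by
      intro i hi
      have hAS : A i ⊆ S := (Finset.filter_subset _ _).trans (S.erase_subset x)
      have hbi : 1 ≤ b i := by simpa using hb i hi {x} (by simpa using hx) (by simp)
      refine ih (Function.update b i (b i - 1)) (A i) (hS.mono hAS) (fun j hj => ?_) ?_
      · rcases eq_or_ne j i with rfl | hji
        · simpa using card_le_pred_of_forall_rel (hR j) hx (Finset.filter_subset _ _)
            (fun y hy => (Finset.mem_filter.1 hy).2) (hb j hj)
        · rw [Function.update_of_ne hji]
          exact fun T hT => hb j hj T (hT.trans hAS)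
      · rw [Finset.sum_update_of_mem hi, Finset.sdiff_singleton_eq_erase]
        rw [← Finset.add_sum_erase I b hi] at hn
        omega
    calc S.card = (S.erase x).card + 1 := (Finset.card_erase_add_one hx).symm
      _ ≤ ∑ i ∈ I, (A i).card + 1 := by
          gcongr; exact (Finset.card_le_card hcover).trans Finset.card_biUnion_le
      _ ≤ I.card * (I.card + 1) ^ n + 1 := by
          gcongr; simpa using Finset.sum_le_sum hA
      _ ≤ (I.card + 1) ^ (n + 1) := by
          rw [pow_succ]; nlinarith [Nat.one_le_pow n (I.card + 1) (by omega)]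

open Metric in
theorem exists_card_le_of_subset_closedBall {E : Type*} [PseudoMetricSpace E] [ProperSpace E]
    (c : E) (r : ℝ) {δ : ℝ} (hδ : 0 < δ) :
    ∃ N : ℕ, ∀ T : Finset E, (T : Set E) ⊆ closedBall c r →
      (T : Set E).Pairwise (fun p q => δ ≤ dist p q) → T.card ≤ N := by
  obtain ⟨C, hC, hcover⟩ := totallyBounded_iff.1
    (isCompact_closedBall c r).totallyBounded (δ / 2) (half_pos hδ)
  refine ⟨hC.toFinset.card, fun T hTr hT => ?_⟩
  have hnear : ∀ p ∈ T, ∃ y ∈ hC.toFinset, dist p y < δ / 2 := fun p hp => by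
    simpa using hcover (hTr hp)
  choose! f hfC hf using hnear
  refine Finset.card_le_card_of_injOn f hfC fun p hp q hq hpq => by_contra fun hne => ?_
  linarith [hT hp hq hne, dist_triangle_right p q (f p), hf p hp, hpq ▸ hf q hq]

theorem exists_card_le_of_dist_mem_Icc (E : Type*) [NormedAddCommGroup E] [NormedSpace ℝ E]
    [ProperSpace E] :
    ∃ N : ℕ, ∀ (r : ℝ) (T : Finset E), 0 < r →
      (T : Set E).Pairwise (fun p q => r ≤ dist p q ∧ dist p q ≤ 2 * r) → T.card ≤ N := by
  obtain ⟨N, hN⟩ := exists_card_le_of_subset_closedBall (0 : E) 2 one_pos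
  refine ⟨N, fun r T hr hT => ?_⟩
  classical
  obtain rfl | ⟨p₀, hp₀⟩ := T.eq_empty_or_nonempty
  · simp
  set f : E → E := fun p => r⁻¹ • (p - p₀)
  have hf : ∀ p q, dist (f p) (f q) = r⁻¹ * dist p q := fun p q => by
    simp [f, dist_smul₀, abs_of_pos hr]
  have hfinj : Set.InjOn f T := fun p _ q _ hpq => by
    simpa [hf, hr.ne'] using dist_eq_zero.2 hpq
  rw [← Finset.card_image_of_injOn hfinj]
  refine hN _ ?_ ?_
  · intro x hx
    obtain ⟨p, hp, rfl⟩ := Finset.mem_image.1 hx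
    rcases eq_or_ne p p₀ with rfl | hne
    · simp [f]
    · have : f p₀ = 0 := by simp [f]
      rw [Metric.mem_closedBall, ← this, hf, inv_mul_le_iff₀ hr]
      linarith [(hT hp hp₀ hne).2]
  · intro x hx y hy hxy
    obtain ⟨p, hp, rfl⟩ := Finset.mem_image.1 hx
    obtain ⟨q, hq, rfl⟩ := Finset.mem_image.1 hy
    rw [hf, le_inv_mul_iff₀ hr, mul_one]
    exact (hT hp hq fun h => hxy (h ▸ rfl)).1

theorem isNearlyKDist_iff_exists_finset {d k : ℕ} {ε : ℝ} {S : Finset (Pt d)} :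
    IsNearlyKDist k ε S ↔ ∃ A : Finset ℝ, A.card ≤ k ∧ (∀ a ∈ A, 1 ≤ a) ∧
      (S : Set (Pt d)).Pairwise fun p q => ∃ a ∈ A, dist p q ∈ Set.Icc a (a + ε) := by
  constructor
  · rintro ⟨-, t, ht, hS⟩
    refine ⟨(Finset.range k).image t, Finset.card_image_le.trans (by simp), ?_, ?_⟩
    · simpa using ht
    · intro p hp q hq hpq
      obtain ⟨i, hi, hpqi⟩ := hS p hp q hq hpq
      exact ⟨t i, Finset.mem_image_of_mem t (Finset.mem_range.2 hi), hpqi⟩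
  · rintro ⟨A, hAk, hA, hS⟩
    refine ⟨fun p hp q hq hpq => ?_, fun i => if h : i < A.card then A.equivFin.symm ⟨i, h⟩ else 1,
      fun i _ => ?_, fun p hp q hq hpq => ?_⟩
    · obtain ⟨a, ha, hpqa⟩ := hS hp hq hpq
      exact (hA a ha).trans hpqa.1
    · dsimp only
      split_ifs
      exacts [hA _ (Subtype.prop _), le_rfl]
    · obtain ⟨a, ha, hpqa⟩ := hS hp hq hpq
      refine ⟨A.equivFin ⟨a, ha⟩, (Fin.is_lt _).trans_le hAk, ?_⟩
      simpa using hpqa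

theorem exists_card_le_of_isNearlyKDist (k d : ℕ) :
    ∃ N : ℕ, ∀ S : Finset (Pt d), IsNearlyKDist k 1 S → S.card ≤ N := by
  obtain ⟨N, hN⟩ := exists_card_le_of_dist_mem_Icc (Pt d)
  refine ⟨(k + 1) ^ (k * N), fun S hS => ?_⟩
  obtain ⟨A, hAk, hA, hSA⟩ := isNearlyKDist_iff_exists_finset.1 hS
  have hmono : ∀ a ∈ A, ∀ T ⊆ S,
      (T : Set (Pt d)).Pairwise (fun p q => dist p q ∈ Set.Icc a (a + 1)) → T.card ≤ N :=
    fun a ha T _ hT => hN a T (by linarith [hA a ha])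
      (hT.imp fun p q h => ⟨h.1, by linarith [h.2, hA a ha]⟩)
  calc S.card ≤ (A.card + 1) ^ (A.card * N) := by
        simpa using card_le_pow_of_monochromatic_card_le _
          (fun a p q h => by rwa [dist_comm]) A (fun _ => N) S hSA hmono
    _ ≤ (k + 1) ^ (k * N) := by
        gcongr
        · omega

theorem sqrt_sq_add_sq_mem_Icc {D v ε : ℝ} (hv : 0 ≤ v) (hε : 0 < ε)
    (hD : D ^ 2 / (2 * ε) ≤ v) : √(D ^ 2 + v ^ 2) ∈ Set.Icc v (v + ε) := by
  rw [div_le_iff₀ (by positivity)] at hD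
  constructor
  · exact Real.le_sqrt_of_sq_le (by nlinarith [sq_nonneg D])
  · exact Real.sqrt_le_iff.2 ⟨by linarith, by nlinarith⟩

theorem exists_pos_forall_le_mul {D : Finset ℝ} (hD : ∀ v ∈ D, 0 < v) (B : ℝ) :
    ∃ c > 0, ∀ v ∈ D, B ≤ c * v :=
  ((eventually_gt_atTop 0).and ((Finset.eventually_all D).2 fun v hv =>
    (tendsto_id.atTop_mul_const (hD v hv)).eventually_ge_atTop B)).exists

def finAddEquivProdL2 (d₁ d₂ : ℕ) : Pt (d₁ + d₂) ≃ₗᵢ[ℝ] WithLp 2 (Pt d₁ × Pt d₂) :=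
  (LinearIsometryEquiv.piLpCongrLeft 2 ℝ ℝ finSumFinEquiv.symm).trans
    (PiLp.sumPiLpEquivProdLpPiLp 2 fun _ => ℝ)

theorem dist_finAddEquivProdL2_symm {d₁ d₂ : ℕ} (x x' : Pt d₁) (y y' : Pt d₂) :
    dist ((finAddEquivProdL2 d₁ d₂).symm (WithLp.toLp 2 (x, y)))
      ((finAddEquivProdL2 d₁ d₂).symm (WithLp.toLp 2 (x', y'))) =
      √(dist x x' ^ 2 + dist y y' ^ 2) := by
  rw [LinearIsometryEquiv.dist_map, WithLp.prod_dist_eq_of_L2]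
  rfl

theorem exists_isNearlyKDist_card_mul {k₁ k₂ d₁ d₂ : ℕ} {ε : ℝ} (hε : 0 < ε)
    {S₁ : Finset (Pt d₁)} {S₂ : Finset (Pt d₂)} (h₁ : IsNearlyKDist k₁ ε S₁)
    (h₂ : IsKDistSet k₂ S₂) :
    ∃ S : Finset (Pt (d₁ + d₂)), S.card = S₁.card * S₂.card ∧ IsNearlyKDist (k₁ + k₂) ε S := by
  classical
  obtain ⟨A₁, hA₁k, hA₁, hS₁⟩ := isNearlyKDist_iff_exists_finset.1 h₁
  obtain ⟨D, hDk, hD⟩ := h₂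
  obtain ⟨T, hT⟩ := Metric.isBounded_iff.1 S₁.finite_toSet.isBounded
  set Dpos := D.filter (0 < ·)
  obtain ⟨c, hc, hcD⟩ := exists_pos_forall_le_mul (D := Dpos)
    (fun v hv => (Finset.mem_filter.1 hv).2) (max 1 (T ^ 2 / (2 * ε)))
  set f : Pt d₁ × Pt d₂ → Pt (d₁ + d₂) := fun z =>
    (finAddEquivProdL2 d₁ d₂).symm (WithLp.toLp 2 (z.1, c • z.2))
  have hf : ∀ z z', dist (f z) (f z') = √(dist z.1 z'.1 ^ 2 + (c * dist z.2 z'.2) ^ 2) :=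
    fun z z' => by
      rw [dist_finAddEquivProdL2_symm, dist_smul₀, Real.norm_of_nonneg hc.le]
  have hfinj : Function.Injective f := fun z z' hzz' => by
    have := congrArg WithLp.ofLp ((finAddEquivProdL2 d₁ d₂).symm.injective hzz')
    simp only [Prod.mk.injEq] at this
    exact Prod.ext this.1 (smul_right_injective _ hc.ne' this.2)
  refine ⟨(S₁ ×ˢ S₂).image f, by rw [Finset.card_image_of_injective _ hfinj,
    Finset.card_product], isNearlyKDist_iff_exists_finset.2
    ⟨A₁ ∪ Dpos.image (c * ·), ?_, ?_, ?_⟩⟩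
  · calc (A₁ ∪ Dpos.image (c * ·)).card ≤ A₁.card + Dpos.card :=
          (Finset.card_union_le _ _).trans (Nat.add_le_add_left Finset.card_image_le _)
      _ ≤ k₁ + k₂ := add_le_add hA₁k ((Finset.card_filter_le _ _).trans hDk)
  · simp only [Finset.mem_union, Finset.mem_image]
    rintro a (ha | ⟨v, hv, rfl⟩)
    exacts [hA₁ a ha, le_of_max_le_left (hcD v hv)]
  · rw [Finset.coe_image, hfinj.injOn.pairwise_image]
    rintro ⟨x, y⟩ hxy ⟨x', y'⟩ hxy' hne
    simp only [Finset.coe_product, Set.mem_prod, Finset.mem_coe] at hxy hxy'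
    simp only [Function.onFun, hf]
    rcases eq_or_ne y y' with rfl | hy
    · obtain ⟨a, ha, hxa⟩ := hS₁ hxy.1 hxy'.1 fun h => hne (h ▸ rfl)
      refine ⟨a, Finset.mem_union_left _ ha, ?_⟩
      simpa [Real.sqrt_sq dist_nonneg] using hxa
    · have hv : dist y y' ∈ Dpos :=
        Finset.mem_filter.2 ⟨hD y hxy.2 y' hxy'.2 hy, dist_pos.2 hy⟩
      refine ⟨c * dist y y', Finset.mem_union_right _ (Finset.mem_image_of_mem _ hv), ?_⟩
      refine sqrt_sq_add_sq_mem_Icc (by positivity) hε ?_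
      calc dist x x' ^ 2 / (2 * ε) ≤ T ^ 2 / (2 * ε) := by
            gcongr; exact hT hxy.1 hxy'.1
        _ ≤ c * dist y y' := le_of_max_le_right (hcD _ hv)

theorem exists_card_eq_mDist (k d : ℕ) :
    ∃ S : Finset (Pt d), S.card = mDist k d ∧ IsKDistSet k S := by
  have hempty : IsKDistSet k (∅ : Finset (Pt d)) := ⟨∅, by simp, by simp⟩
  set Q := {n : ℕ | ∃ S : Finset (Pt d), S.card = n ∧ IsKDistSet k S} with hQ
  by_cases hb : BddAbove Q
  · exact Nat.sSup_mem (s := Q) ⟨0, ∅, rfl, hempty⟩ hb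
  · -- an unbounded supremum is junk `0`, attained by the empty set
    refine ⟨∅, ?_, hempty⟩
    rw [mDist, ← hQ, csSup_of_not_bddAbove hb, csSup_empty]
    rfl

theorem exists_isNearlyKDist_card_eq_prod_mDist {ε : ℝ} (hε : 0 < ε) :
    ∀ (s : ℕ) (ks ds : Fin s → ℕ), ∃ S : Finset (Pt (∑ i, ds i)),
      S.card = ∏ i, mDist (ks i) (ds i) ∧ IsNearlyKDist (∑ i, ks i) ε S
  | 0, _, _ => ⟨{0}, rfl, isNearlyKDist_iff_exists_finset.2 ⟨∅, le_rfl, by simp, by simp⟩⟩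
  | s + 1, ks, ds => by
    obtain ⟨S₁, hS₁card, hS₁⟩ :=
      exists_isNearlyKDist_card_eq_prod_mDist hε s (ks ∘ Fin.castSucc) (ds ∘ Fin.castSucc)
    obtain ⟨S₂, hS₂card, hS₂⟩ := exists_card_eq_mDist (ks (Fin.last s)) (ds (Fin.last s))
    rw [Fin.sum_univ_castSucc, Fin.sum_univ_castSucc, Fin.prod_univ_castSucc]
    simpa [hS₁card, hS₂card] using exists_isNearlyKDist_card_mul hε hS₁ hS₂

theorem bddAbove_setOf_isNearlyKDist (k d : ℕ) :
    BddAbove {M : ℕ | ∀ ε : ℝ, 0 < ε → ∃ S : Finset (Pt d), S.card = M ∧ IsNearlyKDist k ε S} := by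
  obtain ⟨N, hN⟩ := exists_card_le_of_isNearlyKDist k d
  refine ⟨N, fun M hM => ?_⟩
  obtain ⟨S, rfl, hS⟩ := hM 1 one_pos
  exact hN S hS

theorem stmt5_general (k d : ℕ) :
    Mprime k d ≤ Mnear k d := by
  refine csSup_le' ?_
  rintro _ ⟨s, ks, ds, -, -, rfl, rfl, rfl⟩
  exact le_csSup (bddAbove_setOf_isNearlyKDist _ _)
    fun ε hε => exists_isNearlyKDist_card_eq_prod_mDist hε s ks ds

theorem stmt5 (k d : ℕ) (hk : 1 ≤ k) (hd : 1 ≤ d) :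
    Mprime k d ≤ Mnear k d :=
  stmt5_general k d
end
end

section
/- Let S_1, S_2, … be a sequence where S_i is an ε_i-nearly k-distance set in ℝ^{d'} with distances 1 ≤ t_1^i < … < t_k^i and ε_i → 0. If there is a constant K such that t_{j+1}^i / t_j^i ≤ K for all i and 1 ≤ j < k, then limsup_{i→∞} |S_i| ≤ m_k(d'). -/
open scoped BigOperators RealInnerProductSpace
open Filter

noncomputable section

/-!
Rescale `S i` by `1 / t i 0`: the normalized distances `t i j / t i 0` then lie in
`[1, max K 1 ^ k]` and the error `ε i / t i 0` tends to `0`. If `|S i| > m_k(d')` infinitely often,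
pick `m_k(d') + 1` points in each such `S i` and pass to a limit along an ultrafilter, which replaces
the extraction of convergent subsequences. After translating one point to the origin the
configurations are bounded, each pair of points settles on a single distance index along the
ultrafilter, and so the limit is a `k`-distance set of `m_k(d') + 1` points, distinct because all
limit distances are at least `1`. This contradicts the definition of `m_k(d')` as a supremum, which
is finite by the polynomial method: the polynomials `∏_{c ∈ D \ {0}} (|x - p|² - c²)`, `p ∈ S`,
have degree at most `2k` and vanish at every point of `S` except `p`, so they are linearly
independent.
-/

open MvPolynomial in
def sphereProd {d : ℕ} (p : Pt d) (D : Finset ℝ) : MvPolynomial (Fin d) ℝ :=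
  ∏ c ∈ D, (∑ m, (X m - C (p m)) ^ 2 - C (c ^ 2))

open MvPolynomial in
lemma totalDegree_sphereProd_le {d : ℕ} (p : Pt d) (D : Finset ℝ) :
    (sphereProd p D).totalDegree ≤ 2 * D.card := by
  have hfactor : ∀ c : ℝ, (∑ m, (X m - C (p m)) ^ 2 - C (c ^ 2)).totalDegree ≤ 2 := by
    intro c
    refine (totalDegree_sub_C_le _ _).trans (totalDegree_finsetSum_le fun m _ => ?_)
    calc ((X m - C (p m)) ^ 2).totalDegree ≤ 2 * (X m - C (p m)).totalDegree :=
          totalDegree_pow _ _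
      _ ≤ 2 * 1 := by
          gcongr
          exact (totalDegree_sub_C_le _ _).trans (totalDegree_X m).le
      _ = 2 := rfl
  calc (sphereProd p D).totalDegree
        ≤ ∑ c ∈ D, (∑ m, (X m - C (p m)) ^ 2 - C (c ^ 2)).totalDegree :=
          totalDegree_finsetProd _ _
    _ ≤ D.card • 2 := Finset.sum_le_card_nsmul _ _ _ fun c _ => hfactor c
    _ = 2 * D.card := by rw [smul_eq_mul, mul_comm]

lemma eval_sphereProd {d : ℕ} (p q : Pt d) (D : Finset ℝ) :
    MvPolynomial.eval (fun m => q m) (sphereProd p D) = ∏ c ∈ D, (dist q p ^ 2 - c ^ 2) := by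
  have hdist : dist q p ^ 2 = ∑ m, (q m - p m) ^ 2 := by
    rw [EuclideanSpace.dist_eq, Real.sq_sqrt (by positivity)]
    simp [Real.dist_eq, sq_abs]
  simp [sphereProd, hdist]

open MvPolynomial in
theorem IsKDistSet.card_le_finrank {d k : ℕ} {S : Finset (Pt d)} (h : IsKDistSet k S) :
    S.card ≤ Module.finrank ℝ (restrictTotalDegree (Fin d) ℝ (2 * k)) := by
  obtain ⟨D, hDcard, hD⟩ := h
  set D' := D.erase 0
  have hdeg : ∀ p, sphereProd p D' ∈ restrictTotalDegree (Fin d) ℝ (2 * k) := fun p =>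
    (mem_restrictTotalDegree _ _ _).2 <| (totalDegree_sphereProd_le p D').trans <| by
      have : D'.card ≤ D.card := Finset.card_erase_le; omega
  have hvanish : ∀ p ∈ S, ∀ q ∈ S, p ≠ q → eval (fun m => q m) (sphereProd p D') = 0 :=
    fun p hp q hq hpq => by
      rw [eval_sphereProd]
      refine Finset.prod_eq_zero (i := dist q p) ?_ (sub_self _)
      exact Finset.mem_erase.2 ⟨dist_ne_zero.2 hpq.symm, hD q hq p hp hpq.symm⟩
  have hcentre : ∀ p : Pt d, eval (fun m => p m) (sphereProd p D') ≠ 0 := fun p => by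
    rw [eval_sphereProd, Finset.prod_ne_zero_iff]
    intro c hc
    simpa [dist_self, sq_eq_zero_iff] using Finset.ne_of_mem_erase hc
  have hli : LinearIndependent ℝ fun p : S => (⟨sphereProd p D', hdeg p⟩ :
      restrictTotalDegree (Fin d) ℝ (2 * k)) := by
    refine LinearIndependent.of_comp (restrictTotalDegree (Fin d) ℝ (2 * k)).subtype ?_
    rw [Fintype.linearIndependent_iff]
    intro g hg q
    have hq := congrArg (eval fun m => (q : Pt d) m) hg
    simp only [Function.comp_apply, Submodule.subtype_apply, map_sum, smul_eq_C_mul, map_mul,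
      eval_C, map_zero] at hq
    rw [Finset.sum_eq_single q (fun p _ hpq => by
      rw [hvanish p p.2 q q.2 (Subtype.coe_injective.ne hpq), mul_zero]) (by simp)] at hq
    exact (mul_eq_zero.1 hq).resolve_right (hcentre q)
  simpa using hli.fintype_card_le_finrank

theorem IsKDistSet.card_le_mDist {d k : ℕ} {S : Finset (Pt d)} (h : IsKDistSet k S) :
    S.card ≤ mDist k d :=
  le_csSup ⟨_, fun _ ⟨_, hcard, hT⟩ => hcard ▸ hT.card_le_finrank⟩ ⟨S, rfl, h⟩

lemma Filter.Frequently.exists_ultrafilter {ι : Type*} {l : Filter ι} {p : ι → Prop}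
    (h : ∃ᶠ i in l, p i) : ∃ U : Ultrafilter ι, ↑U ≤ l ∧ ∀ᶠ i in U, p i := by
  have := frequently_iff_neBot.1 h
  obtain ⟨U, hU⟩ := Ultrafilter.exists_le (l ⊓ Filter.principal {i | p i})
  exact ⟨U, hU.trans inf_le_left, hU.trans inf_le_right (mem_principal_self _)⟩

lemma IsCompact.exists_tendsto_of_eventually_mem {X ι : Type*} [TopologicalSpace X] {C : Set X}
    (hC : IsCompact C) (U : Ultrafilter ι) {f : ι → X} (hf : ∀ᶠ i in U, f i ∈ C) :
    ∃ z ∈ C, Tendsto f U (nhds z) :=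
  hC.ultrafilter_le_nhds' (U.map f) hf

lemma dist_eq_of_tendsto_of_mem_Icc {ι E : Type*} [PseudoMetricSpace E] {l : Filter ι} [l.NeBot]
    {p q : ι → E} {p₀ q₀ : E} {s δ : ι → ℝ} {σ : ℝ}
    (hp : Tendsto p l (nhds p₀)) (hq : Tendsto q l (nhds q₀)) (hs : Tendsto s l (nhds σ))
    (hδ : Tendsto δ l (nhds 0))
    (h : ∀ᶠ i in l, dist (p i) (q i) ∈ Set.Icc (s i) (s i + δ i)) :
    dist p₀ q₀ = σ := by
  have hupper : Tendsto (fun i => s i + δ i) l (nhds σ) := by simpa using hs.add hδ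
  exact tendsto_nhds_unique (hp.dist hq) <| tendsto_of_tendsto_of_tendsto_of_le_of_le' hs hupper
    (h.mono fun _ hi => hi.1) (h.mono fun _ hi => hi.2)

lemma isKDistSet_image_of_dist_eq {α κ : Type*} [Fintype α] [Fintype κ] {d : ℕ}
    [DecidableEq (Pt d)] {y : α → Pt d} {σ : κ → ℝ}
    (h : ∀ a b, a ≠ b → ∃ j, dist (y a) (y b) = σ j) :
    IsKDistSet (Fintype.card κ) (Finset.univ.image y) := by
  refine ⟨Finset.univ.image σ, Finset.card_image_le, ?_⟩
  simp only [Finset.mem_image, Finset.mem_univ, true_and]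
  rintro _ ⟨a, rfl⟩ _ ⟨b, rfl⟩ hab
  obtain ⟨j, hj⟩ := h a b (ne_of_apply_ne y hab)
  exact ⟨j, hj.symm⟩

theorem exists_kDistSet_of_tendsto {ι α κ : Type*} [Fintype α] [Nonempty α] [Fintype κ]
    {d : ℕ} (U : Ultrafilter ι) (x : ι → α → Pt d) (s : ι → κ → ℝ) (δ : ι → ℝ) (R : ℝ)
    (hs : ∀ᶠ i in U, ∀ j, s i j ∈ Set.Icc 1 R) (hδ : Tendsto δ U (nhds 0))
    (hx : ∀ᶠ i in U, ∀ a b, a ≠ b →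
      ∃ j, dist (x i a) (x i b) ∈ Set.Icc (s i j) (s i j + δ i)) :
    ∃ T : Finset (Pt d), T.card = Fintype.card α ∧ IsKDistSet (Fintype.card κ) T := by
  classical
  obtain ⟨a₀⟩ := ‹Nonempty α›
  have hxlim : ∀ a, ∃ z, Tendsto (fun i => x i a - x i a₀) U (nhds z) := by
    intro a
    rcases eq_or_ne a a₀ with rfl | ha
    · exact ⟨0, by simp⟩
    refine ((isCompact_closedBall (0 : Pt d) (R + 1)).exists_tendsto_of_eventually_mem U
      ?_).imp fun _ h => h.2
    filter_upwards [hs, hx, hδ.eventually (eventually_le_nhds one_pos)] with i hsi hxi hδi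
    obtain ⟨j, hj⟩ := hxi a a₀ ha
    rw [mem_closedBall_zero_iff, ← dist_eq_norm]
    linarith [hj.2, (hsi j).2]
  have hslim : ∀ j, ∃ σ ∈ Set.Icc 1 R, Tendsto (fun i => s i j) U (nhds σ) := fun j =>
    isCompact_Icc.exists_tendsto_of_eventually_mem U (hs.mono fun _ hi => hi j)
  choose y hy using hxlim
  choose σ hσ1 hσ using hslim
  have hdist : ∀ a b, a ≠ b → ∃ j, dist (y a) (y b) = σ j := by
    intro a b hab
    obtain ⟨j, hj⟩ := Ultrafilter.eventually_exists_iff.1 (hx.mono fun i hi => hi a b hab)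
    refine ⟨j, dist_eq_of_tendsto_of_mem_Icc (hy a) (hy b) (hσ j) hδ ?_⟩
    simpa only [dist_sub_right] using hj
  have hinj : Function.Injective y := fun a b hab => by
    by_contra hne
    obtain ⟨j, hj⟩ := hdist a b hne
    linarith [(hσ1 j).1, hab ▸ hj, dist_self (y b)]
  exact ⟨_, by rw [Finset.card_image_of_injective _ hinj, Finset.card_univ],
    isKDistSet_image_of_dist_eq hdist⟩

lemma div_mem_Icc_one_pow_of_lt_of_le_mul {t : ℕ → ℝ} {K : ℝ} {k : ℕ} (h0 : 0 < t 0)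
    (hmono : ∀ j, j + 1 < k → t j < t (j + 1))
    (hratio : ∀ j, j + 1 < k → t (j + 1) ≤ K * t j) :
    ∀ j < k, t j / t 0 ∈ Set.Icc 1 (max K 1 ^ j) := by
  suffices h : ∀ j < k, t 0 ≤ t j ∧ t j ≤ max K 1 ^ j * t 0 by
    intro j hj
    rw [Set.mem_Icc, le_div_iff₀ h0, div_le_iff₀ h0, one_mul]
    exact h j hj
  intro j hj
  induction j with
  | zero => simp
  | succ j ih =>
    obtain ⟨hlow, hup⟩ := ih (by omega)
    refine ⟨hlow.trans (hmono j hj).le, ?_⟩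
    calc t (j + 1) ≤ K * t j := hratio j hj
      _ ≤ max K 1 * (max K 1 ^ j * t 0) := by
          gcongr
          · exact h0.le.trans hlow
          · exact le_max_left _ _
      _ = max K 1 ^ (j + 1) * t 0 := by ring

lemma dist_inv_smul_mem_Icc {E : Type*} [NormedAddCommGroup E] [NormedSpace ℝ E] {p q : E}
    {c a e : ℝ} (hc : 0 < c) (h : dist p q ∈ Set.Icc a (a + e)) :
    dist (c⁻¹ • p) (c⁻¹ • q) ∈ Set.Icc (a / c) (a / c + e / c) := by
  rw [dist_smul₀, Real.norm_of_nonneg (inv_nonneg.2 hc.le), inv_mul_eq_div, ← add_div]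
  exact ⟨div_le_div_of_nonneg_right h.1 hc.le, div_le_div_of_nonneg_right h.2 hc.le⟩

lemma tendsto_div_of_one_le {ι : Type*} {l : Filter ι} {ε c : ι → ℝ}
    (hε : Tendsto ε l (nhds 0)) (hc : ∀ i, 1 ≤ c i) :
    Tendsto (fun i => ε i / c i) l (nhds 0) := by
  refine squeeze_zero_norm (fun i => ?_) (by simpa using hε.norm)
  rw [norm_div, Real.norm_of_nonneg (zero_le_one.trans (hc i))]
  exact div_le_self (norm_nonneg _) (hc i)

theorem stmt7_general (d' k : ℕ)
    (S : ℕ → Finset (Pt d')) (ε : ℕ → ℝ) (t : ℕ → ℕ → ℝ) (K : ℝ)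
    (hεlim : Tendsto ε atTop (nhds 0))
    (ht1 : ∀ i, 1 ≤ t i 0)
    (htmono : ∀ i j, j + 1 < k → t i j < t i (j + 1))
    (hratio : ∀ i j, j + 1 < k → t i (j + 1) ≤ K * t i j)
    (hSdist : ∀ i, ∀ p ∈ S i, ∀ q ∈ S i, p ≠ q →
      ∃ j < k, dist p q ∈ Set.Icc (t i j) (t i j + ε i)) :
    ∀ᶠ i in atTop, (S i).card ≤ mDist k d' := by
  by_contra hcon
  obtain ⟨U, hUat, hUbig⟩ := (not_eventually.1 hcon).exists_ultrafilter
  have hconfig : ∀ i, ∃ g : Fin (mDist k d' + 1) → Pt d', ¬ (S i).card ≤ mDist k d' →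
      Function.Injective g ∧ ∀ a, g a ∈ S i := by
    intro i
    by_cases hi : (S i).card ≤ mDist k d'
    · exact ⟨0, fun h => absurd hi h⟩
    obtain ⟨g, hg⟩ := Function.Embedding.exists_of_card_le_finset
      (α := Fin (mDist k d' + 1)) (s := S i) (by simpa using hi)
    exact ⟨g, fun _ => ⟨g.injective, fun a => hg ⟨a, rfl⟩⟩⟩
  choose g hg using hconfig
  have ht0 : ∀ i, 0 < t i 0 := fun i => one_pos.trans_le (ht1 i)
  have hs : ∀ i (j : Fin k), t i j / t i 0 ∈ Set.Icc 1 (max K 1 ^ k) := fun i j => by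
    have h := div_mem_Icc_one_pow_of_lt_of_le_mul (ht0 i) (htmono i) (hratio i) j j.2
    exact ⟨h.1, h.2.trans (pow_le_pow_right₀ (le_max_right _ _) j.2.le)⟩
  have hx : ∀ᶠ i in U, ∀ a b, a ≠ b → ∃ j : Fin k,
      dist ((t i 0)⁻¹ • g i a) ((t i 0)⁻¹ • g i b) ∈
        Set.Icc (t i j / t i 0) (t i j / t i 0 + ε i / t i 0) := by
    filter_upwards [hUbig] with i hi a b hab
    obtain ⟨hinj, hmem⟩ := hg i hi
    obtain ⟨j, hj, hd⟩ := hSdist i _ (hmem a) _ (hmem b) (hinj.ne hab)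
    exact ⟨⟨j, hj⟩, dist_inv_smul_mem_Icc (ht0 i) hd⟩
  obtain ⟨T, hTcard, hT⟩ := exists_kDistSet_of_tendsto U _ _ _ _ (.of_forall hs)
    ((tendsto_div_of_one_le hεlim ht1).mono_left hUat) hx
  have := hT.card_le_mDist
  simp only [Fintype.card_fin] at hTcard this
  omega

theorem stmt7 (d' k : ℕ) (hk : 1 ≤ k)
    (S : ℕ → Finset (Pt d')) (ε : ℕ → ℝ) (t : ℕ → ℕ → ℝ) (K : ℝ)
    (hε : ∀ i, 0 < ε i) (hεlim : Tendsto ε atTop (nhds 0))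
    (ht1 : ∀ i, 1 ≤ t i 0)
    (htmono : ∀ i j, j + 1 < k → t i j < t i (j + 1))
    (hratio : ∀ i j, j + 1 < k → t i (j + 1) ≤ K * t i j)
    (hSsep : ∀ i, Separated (S i))
    (hSdist : ∀ i, ∀ p ∈ S i, ∀ q ∈ S i, p ≠ q →
      ∃ j < k, dist p q ∈ Set.Icc (t i j) (t i j + ε i)) :
    ∀ᶠ i in atTop, (S i).card ≤ mDist k d' :=
  stmt7_general d' k S ε t K hεlim ht1 htmono hratio hSdist

end
end

section
/- Let p, q, r, q', r' ∈ ℝ^d with ‖p − q‖ = ‖p − q'‖, ‖p − r‖ = ‖p − r'‖, where the angle between p − q and p − q' is 2α and the angle between p − r and p − r' is 2α, and suppose all pairwise distance ratios among the relevant points are bounded by K (in particular ‖p−q‖, ‖p−r‖ ≤ K‖q−r‖). Then the angle between the vectors q' − r' and q − r is at most 20(Kα)^{1/2}. -/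
open scoped BigOperators RealInnerProductSpace
open Filter

noncomputable section

private lemma pi_sq_le_ten : Real.pi ^ 2 ≤ 10 := by
  nlinarith [Real.pi_lt_d2, Real.pi_gt_three]

private lemma fifth_le_two_div_pi_sq : (1:ℝ) / 5 ≤ 2 / Real.pi ^ 2 := by
  rw [div_le_div_iff₀ (by norm_num) (by positivity : (0:ℝ) < Real.pi ^ 2)]
  linarith [pi_sq_le_ten]

set_option maxHeartbeats 1600000 in
theorem stmt14 (d : ℕ) (p q r q' r' : Pt d) (K α : ℝ) (hK : 0 < K)
    (hq : dist p q = dist p q') (hr : dist p r = dist p r')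
    (haq : InnerProductGeometry.angle (q - p) (q' - p) = 2 * α)
    (har : InnerProductGeometry.angle (r - p) (r' - p) = 2 * α)
    (hqr : q ≠ r)
    (h₁ : dist p q ≤ K * dist q r) (h₂ : dist p r ≤ K * dist q r) :
    InnerProductGeometry.angle (q' - r') (q - r) ≤ 20 * Real.sqrt (K * α) := by
  obtain ⟨β, hβdef⟩ : ∃ b : ℝ, InnerProductGeometry.angle (q' - r') (q - r) = b := ⟨_, rfl⟩
  rw [hβdef]
  have hβ0 : 0 ≤ β := hβdef ▸ InnerProductGeometry.angle_nonneg _ _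
  have hβπ : β ≤ Real.pi := hβdef ▸ InnerProductGeometry.angle_le_pi _ _
  have hα0 : 0 ≤ α := by
    have h := InnerProductGeometry.angle_nonneg (q - p) (q' - p)
    rw [haq] at h; linarith
  have hKα0 : 0 ≤ K * α := mul_nonneg hK.le hα0
  by_cases hbig : Real.pi ≤ 20 * Real.sqrt (K * α)
  · linarith
  push_neg at hbig
  have hs0 : 0 ≤ Real.sqrt (K * α) := Real.sqrt_nonneg _
  have hssq : Real.sqrt (K * α) ^ 2 = K * α := Real.sq_sqrt hKα0
  have hsmall : K * α < 1 / 16 := by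
    have h1 : Real.sqrt (K * α) < Real.pi / 20 := by linarith
    nlinarith [Real.pi_lt_d2, Real.pi_gt_three]
  obtain ⟨c, hc⟩ : ∃ c : ℝ, dist q r = c := ⟨_, rfl⟩
  rw [hc] at h₁ h₂
  have hc0 : 0 < c := hc ▸ dist_pos.2 hqr
  have key : ∀ x x' : Pt d, dist p x = dist p x' →
      InnerProductGeometry.angle (x - p) (x' - p) = 2 * α →
      dist p x ≤ K * c → ‖x - x'‖ ≤ 2 * α * (K * c) := by
    intro x x' hd hang hle
    have hnx : ‖x - p‖ = dist p x := by rw [dist_eq_norm, norm_sub_rev]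
    have hnx' : ‖x' - p‖ = dist p x := by rw [hd, dist_eq_norm, norm_sub_rev]
    have hinner : ⟪x - p, x' - p⟫ = Real.cos (2 * α) * (dist p x * dist p x) := by
      rw [← InnerProductGeometry.cos_angle_mul_norm_mul_norm, hang, hnx, hnx']
    have hxx' : ‖x - x'‖ ^ 2 = 2 * (dist p x) ^ 2 * (1 - Real.cos (2 * α)) := by
      have hrw : x - x' = (x - p) - (x' - p) := by abel
      rw [hrw, norm_sub_sq_real, hinner, hnx, hnx']; ring
    have hcos : 1 - Real.cos (2 * α) ≤ (2 * α) ^ 2 / 2 := by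
      linarith [Real.one_sub_sq_div_two_le_cos (x := 2 * α)]
    have hd0 : (0:ℝ) ≤ dist p x := dist_nonneg
    have hdsq : dist p x * dist p x ≤ (K * c) * (K * c) :=
      mul_le_mul hle hle hd0 (hd0.trans hle)
    have p1 : dist p x ^ 2 * (1 - Real.cos (2 * α)) ≤ dist p x ^ 2 * (2 * α ^ 2) :=
      mul_le_mul_of_nonneg_left (by linarith) (sq_nonneg _)
    have p2 : α ^ 2 * (dist p x * dist p x) ≤ α ^ 2 * ((K * c) * (K * c)) :=
      mul_le_mul_of_nonneg_left hdsq (sq_nonneg α)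
    have h2 : ‖x - x'‖ ^ 2 ≤ (2 * α * (K * c)) ^ 2 := by
      rw [hxx']; nlinarith [p1, p2]
    have hnn : (0:ℝ) ≤ 2 * α * (K * c) := by positivity
    have h3 := Real.sqrt_le_sqrt h2
    rwa [Real.sqrt_sq (norm_nonneg _), Real.sqrt_sq hnn] at h3
  have hq' : ‖q - q'‖ ≤ 2 * α * (K * c) := key q q' hq haq h₁
  have hr' : ‖r - r'‖ ≤ 2 * α * (K * c) := key r r' hr har h₂
  have hw : ‖q - r‖ = c := by rw [← dist_eq_norm, hc]
  have hdiff : ‖(q - r) - (q' - r')‖ ≤ 4 * (K * α) * c := by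
    have hrw : (q - r) - (q' - r') = (q - q') - (r - r') := by abel
    rw [hrw]
    calc ‖(q - q') - (r - r')‖ ≤ ‖q - q'‖ + ‖r - r'‖ := norm_sub_le _ _
      _ ≤ 4 * (K * α) * c := by linarith
  have hune : 3 / 4 * c ≤ ‖q' - r'‖ := by
    have h := norm_sub_norm_le (q - r) (q' - r')
    rw [hw] at h
    nlinarith
  have hlaw : ‖(q' - r') - (q - r)‖ ^ 2 =
      ‖q' - r'‖ ^ 2 - 2 * (Real.cos β * (‖q' - r'‖ * ‖q - r‖)) + ‖q - r‖ ^ 2 := by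
    rw [norm_sub_sq_real, ← InnerProductGeometry.cos_angle_mul_norm_mul_norm, hβdef]
  have hcoslow : Real.cos β ≤ 1 - 2 / Real.pi ^ 2 * β ^ 2 :=
    Real.cos_le_one_sub_mul_cos_sq (by rw [abs_of_nonneg hβ0]; exact hβπ)
  have h5 : (1:ℝ) / 5 * β ^ 2 ≤ 2 / Real.pi ^ 2 * β ^ 2 :=
    mul_le_mul_of_nonneg_right fifth_le_two_div_pi_sq (sq_nonneg β)
  obtain ⟨nu, hnu⟩ : ∃ t : ℝ, ‖q' - r'‖ = t := ⟨_, rfl⟩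
  obtain ⟨nd, hnd⟩ : ∃ t : ℝ, ‖(q' - r') - (q - r)‖ = t := ⟨_, rfl⟩
  have hnd0 : 0 ≤ nd := hnd ▸ norm_nonneg _
  rw [hnu] at hune
  rw [hnd, hnu, hw] at hlaw
  have h1 : nd ≤ 4 * (K * α) * c := by
    rw [← hnd, norm_sub_rev]; exact hdiff
  clear hnu hnd hdiff key hβdef hq hr haq har hbig hw hc
  have h1sq : nd ^ 2 ≤ (4 * (K * α) * c) ^ 2 :=
    pow_le_pow_left₀ hnd0 h1 2
  have hA : 2 * (nu * c) * (1 - Real.cos β) ≤ (4 * (K * α) * c) ^ 2 := by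
    linarith [sq_nonneg (nu - c)]
  have hnu0 : 0 < nu := lt_of_lt_of_le (by linarith) hune
  have hcosβ : 1 / 5 * β ^ 2 ≤ 1 - Real.cos β := by linarith
  have hB : 2 * (nu * c) * (1 / 5 * β ^ 2) ≤ (4 * (K * α) * c) ^ 2 := by
    have h6 : 2 * (nu * c) * (1 / 5 * β ^ 2) ≤ 2 * (nu * c) * (1 - Real.cos β) :=
      mul_le_mul_of_nonneg_left hcosβ (by positivity)
    linarith
  have e1 : 2 * ((3 / 4 * c) * c) * (1 / 5 * β ^ 2) ≤ 2 * (nu * c) * (1 / 5 * β ^ 2) := by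
    have h7 : (3 / 4 * c) * c ≤ nu * c := mul_le_mul_of_nonneg_right hune hc0.le
    have h8 : (0:ℝ) ≤ 1 / 5 * β ^ 2 := by positivity
    have := mul_le_mul_of_nonneg_right h7 h8
    linarith
  have e2 : 3 / 10 * β ^ 2 ≤ 16 * (K * α) ^ 2 := by
    have hc2 : (0:ℝ) < c ^ 2 := by positivity
    have h9 : (3 / 10 * β ^ 2) * c ^ 2 ≤ (16 * (K * α) ^ 2) * c ^ 2 := by nlinarith [e1, hB]
    exact le_of_mul_le_mul_right h9 hc2
  have e3 : (K * α) * (K * α) ≤ (K * α) * (1 / 16) :=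
    mul_le_mul_of_nonneg_left hsmall.le hKα0
  have hβsq : β ^ 2 ≤ 400 * (K * α) := by nlinarith [e2, e3]
  have e4 := Real.sqrt_le_sqrt hβsq
  rw [Real.sqrt_sq hβ0] at e4
  rw [show (400:ℝ) * (K * α) = 20 ^ 2 * (K * α) by ring,
    Real.sqrt_mul (by positivity), Real.sqrt_sq (by norm_num)] at e4
  exact e4

end
end

section
/- For d ≥ 2, the separated planar-style construction gives M_k(d, n) ≥ T(n, N_k(d)), where T(n, s) is the number of edges of the balanced complete s-partite graph on n vertices: given a (d−1, α)-flat ε-nearly k-distance set S' of cardinality N := N_k(d) in ℝ^d with all distances > 2n², replacing each point v ∈ S' by an arithmetic progression of n/N points along the unit normal direction of its flatness hyperplane yields a separated n-point set in which the number of pairs at distance within 1/2 of one of the k distances of S' is exactly T(n, N). -/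
/-!
Scale a flat nearly `k`-distance set `S` of `N` points by `c = 32 m²` and replace each `v ∈ S` by
the progression `c v + a u_v`, `a < m`, along a unit normal `u_v` of its flatness hyperplane. As
`v - w` is almost orthogonal to `u_v` and `u_w`, expanding `‖z + x‖² = ‖z‖² + 2⟪z, x⟫ + ‖x‖²` with
`z = c (v - w)` shows that points of the progressions at `v ≠ w` are at distance within `1/4` of
`c ‖v - w‖`. With `ε = 1/(64 m²)` these distances fall into the unit windows
`[c tᵢ - 1/4, c tᵢ + 3/4]`, while two points of one progression are less than `m` apart. So the
near pairs are exactly the edges of the complete `N`-partite graph with parts of size `m`.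
-/

open scoped BigOperators RealInnerProductSpace
open Filter

noncomputable section

open InnerProductGeometry in
/-- `x` and the vector `y` of the same length along `w` differ by a chord of length at most
`angle x w * ‖x‖`, and `x - y` has the same component along `u` as `x`. -/
theorem abs_inner_le_angle_mul_norm {E : Type*} [NormedAddCommGroup E] [InnerProductSpace ℝ E]
    {w u : E} (hw : w ≠ 0) (hwu : ⟪w, u⟫ = 0) (hu : ‖u‖ = 1) (x : E) :
    |⟪x, u⟫| ≤ angle x w * ‖x‖ := by
  rcases eq_or_ne x 0 with rfl | hx
  · simp
  set y := (‖x‖ / ‖w‖) • w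
  have hy : ‖y‖ = ‖x‖ := by
    rw [norm_smul, Real.norm_of_nonneg (by positivity), div_mul_cancel₀ _ (norm_ne_zero_iff.2 hw)]
  have hchord : ‖x - y‖ ^ 2 ≤ (angle x w * ‖x‖) ^ 2 := by
    have hcos := norm_sub_sq_eq_norm_sq_add_norm_sq_sub_two_mul_norm_mul_norm_mul_cos_angle x y
    rw [hy, angle_smul_right_of_pos _ _ (by positivity)] at hcos
    nlinarith [Real.one_sub_sq_div_two_le_cos (x := angle x w), sq_nonneg ‖x‖]
  calc |⟪x, u⟫| = |⟪x - y, u⟫| := by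
        rw [inner_sub_left, real_inner_smul_left, hwu, mul_zero, sub_zero]
    _ ≤ ‖x - y‖ := by simpa [hu] using abs_real_inner_le_norm (x - y) u
    _ ≤ angle x w * ‖x‖ :=
        (pow_le_pow_iff_left₀ (norm_nonneg _)
          (mul_nonneg (angle_nonneg _ _) (norm_nonneg _)) two_ne_zero).1 hchord

theorem abs_inner_le_vsAngle_mul_norm {d : ℕ} {Λ : Submodule ℝ (Pt d)} (hΛ : Λ ≠ ⊥)
    {u : Pt d} (hu : u ∈ Λᗮ) (hu1 : ‖u‖ = 1) (x : Pt d) :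
    |⟪x, u⟫| ≤ vsAngle x Λ * ‖x‖ := by
  rcases eq_or_ne x 0 with rfl | hx
  · simp
  obtain ⟨w₀, hw₀, hw₀0⟩ := Submodule.exists_mem_ne_zero_of_ne_bot hΛ
  rw [← div_le_iff₀ (norm_pos_iff.2 hx)]
  refine le_csInf ⟨_, w₀, hw₀, hw₀0, rfl⟩ ?_
  rintro _ ⟨w, hw, hw0, rfl⟩
  rw [div_le_iff₀ (norm_pos_iff.2 hx)]
  exact abs_inner_le_angle_mul_norm hw0 (hu w hw) hu1 x

theorem IsFlatAt.exists_unit_normal {d j : ℕ} {S : Finset (Pt d)} {p : Pt d} {α : ℝ}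
    (hflat : IsFlatAt S p j α) (hj : 0 < j) (hjd : j < d) :
    ∃ u : Pt d, ‖u‖ = 1 ∧ ∀ q ∈ S, q ≠ p → |⟪p - q, u⟫| ≤ α * ‖p - q‖ := by
  obtain ⟨Λ, hrank, hangle⟩ := hflat
  have hbot : Λ ≠ ⊥ := by
    rintro rfl
    rw [finrank_bot] at hrank
    omega
  have htop : Λ ≠ ⊤ := by
    rintro rfl
    rw [finrank_top, finrank_euclideanSpace_fin] at hrank
    omega
  obtain ⟨v, hv, hv0⟩ :=
    Submodule.exists_mem_ne_zero_of_ne_bot (mt Submodule.orthogonal_eq_bot_iff.1 htop)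
  refine ⟨‖v‖⁻¹ • v, norm_smul_inv_norm hv0, fun q hq hqp => ?_⟩
  calc |⟪p - q, ‖v‖⁻¹ • v⟫| ≤ vsAngle (p - q) Λ * ‖p - q‖ :=
        abs_inner_le_vsAngle_mul_norm hbot (Λᗮ.smul_mem _ hv) (norm_smul_inv_norm hv0) _
    _ ≤ α * ‖p - q‖ := mul_le_mul_of_nonneg_right (hangle q hq hqp) (norm_nonneg _)

theorem abs_norm_add_sub_norm_le {E : Type*} [NormedAddCommGroup E] [InnerProductSpace ℝ E]
    {z : E} (hz : z ≠ 0) (x : E) :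
    |‖z + x‖ - ‖z‖| ≤ (2 * |⟪z, x⟫| + ‖x‖ ^ 2) / ‖z‖ := by
  have hsum : 0 ≤ ‖z + x‖ + ‖z‖ := by positivity
  rw [le_div_iff₀ (norm_pos_iff.2 hz)]
  calc |‖z + x‖ - ‖z‖| * ‖z‖ ≤ |‖z + x‖ - ‖z‖| * (‖z + x‖ + ‖z‖) := by
        gcongr
        linarith [norm_nonneg (z + x)]
    _ = |2 * ⟪z, x⟫ + ‖x‖ ^ 2| := by
        rw [← abs_of_nonneg hsum, ← abs_mul,
          show (‖z + x‖ - ‖z‖) * (‖z + x‖ + ‖z‖) = ‖z + x‖ ^ 2 - ‖z‖ ^ 2 by ring,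
          norm_add_sq_real]
        ring_nf
    _ ≤ 2 * |⟪z, x⟫| + ‖x‖ ^ 2 :=
        (abs_add_le _ _).trans_eq (by rw [abs_mul, abs_two, abs_of_nonneg (sq_nonneg ‖x‖)])

def IsFlatNormal {d : ℕ} (S : Finset (Pt d)) (u : Pt d → Pt d) (α : ℝ) : Prop :=
  ∀ v ∈ S, ‖u v‖ = 1 ∧ ∀ w ∈ S, w ≠ v → |⟪v - w, u v⟫| ≤ α * ‖v - w‖

def progressionPt {d : ℕ} (u : Pt d → Pt d) (c : ℝ) (x : Pt d × ℕ) : Pt d :=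
  c • x.1 + (x.2 : ℝ) • u x.1

theorem dist_progressionPt_of_fst_eq {d : ℕ} {u : Pt d → Pt d} (c : ℝ) {v : Pt d}
    (hu : ‖u v‖ = 1) (a b : ℕ) :
    dist (progressionPt u c (v, a)) (progressionPt u c (v, b)) = |(a : ℝ) - b| := by
  rw [dist_eq_norm, progressionPt, progressionPt,
    show c • v + (a : ℝ) • u v - (c • v + (b : ℝ) • u v) = ((a : ℝ) - b) • u v by module,
    norm_smul, hu, mul_one, Real.norm_eq_abs]

theorem abs_dist_progressionPt_sub_le {d : ℕ} {S : Finset (Pt d)} {u : Pt d → Pt d} {α c : ℝ}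
    (hu : IsFlatNormal S u α) (hc : 0 < c) {v w : Pt d} (hv : v ∈ S) (hw : w ∈ S) (hvw : v ≠ w)
    (a b : ℕ) :
    |dist (progressionPt u c (v, a)) (progressionPt u c (w, b)) - c * dist v w|
      ≤ 2 * (a + b) * α + (a + b) ^ 2 / (c * dist v w) := by
  obtain ⟨huv, hflatv⟩ := hu v hv
  obtain ⟨huw, hflatw⟩ := hu w hw
  set z : Pt d := c • (v - w)
  set x : Pt d := (a : ℝ) • u v - (b : ℝ) • u w
  have hz : ‖z‖ = c * dist v w := by rw [norm_smul, Real.norm_of_nonneg hc.le, dist_eq_norm]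
  have hz0 : z ≠ 0 := smul_ne_zero hc.ne' (sub_ne_zero.2 hvw)
  have hzx : |⟪z, x⟫| ≤ (a + b) * α * ‖z‖ := by
    have h1 := hflatv w hw hvw.symm
    have h2 := hflatw v hv hvw
    rw [norm_sub_rev] at h2
    have hinner : ⟪z, x⟫ = c * (a * ⟪v - w, u v⟫ + b * ⟪w - v, u w⟫) := by
      simp only [z, x, real_inner_smul_left, real_inner_smul_right, inner_sub_left,
        inner_sub_right]
      ring
    rw [hinner, abs_mul, abs_of_pos hc, norm_smul, Real.norm_of_nonneg hc.le]
    calc c * |a * ⟪v - w, u v⟫ + b * ⟪w - v, u w⟫|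
        ≤ c * (a * (α * ‖v - w‖) + b * (α * ‖v - w‖)) := by
          gcongr
          refine (abs_add_le _ _).trans ?_
          rw [abs_mul, abs_mul, Nat.abs_cast, Nat.abs_cast]
          gcongr
      _ = (a + b) * α * (c * ‖v - w‖) := by ring
  have hx : ‖x‖ ≤ a + b := by
    refine (norm_sub_le _ _).trans_eq ?_
    rw [norm_smul, norm_smul, huv, huw, Real.norm_natCast, Real.norm_natCast, mul_one, mul_one]
  have hdiff : progressionPt u c (v, a) - progressionPt u c (w, b) = z + x := by
    simp only [progressionPt, z, x]
    module
  calc |dist (progressionPt u c (v, a)) (progressionPt u c (w, b)) - c * dist v w|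
      = |‖z + x‖ - ‖z‖| := by rw [dist_eq_norm, hdiff, hz]
    _ ≤ (2 * |⟪z, x⟫| + ‖x‖ ^ 2) / ‖z‖ := abs_norm_add_sub_norm_le hz0 x
    _ ≤ (2 * ((a + b) * α * ‖z‖) + (a + b) ^ 2) / ‖z‖ := by gcongr
    _ = 2 * (a + b) * α + (a + b) ^ 2 / (c * dist v w) := by
        rw [add_div, ← hz]
        field_simp

theorem abs_dist_progressionPt_sub_le_quarter {d m : ℕ} (hm : 0 < m) {S : Finset (Pt d)}
    (hS : Separated S) {u : Pt d → Pt d} (hu : IsFlatNormal S u (32 * m)⁻¹) {v w : Pt d}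
    (hv : v ∈ S) (hw : w ∈ S) (hvw : v ≠ w) {a b : ℕ} (ha : a < m) (hb : b < m) :
    |dist (progressionPt u (32 * m ^ 2) (v, a)) (progressionPt u (32 * m ^ 2) (w, b))
      - 32 * m ^ 2 * dist v w| ≤ 1 / 4 := by
  have hm1 : (1 : ℝ) ≤ m := by exact_mod_cast hm
  have hab : (a : ℝ) + b ≤ 2 * m := by
    have : a + b ≤ 2 * m := by omega
    exact_mod_cast this
  have hvw1 : 1 ≤ dist v w := hS v hv w hw hvw
  refine (abs_dist_progressionPt_sub_le hu (by positivity) hv hw hvw a b).trans ?_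
  have h1 : 2 * (a + b) * (32 * (m : ℝ))⁻¹ ≤ 1 / 8 := by
    rw [← div_eq_mul_inv, div_le_iff₀ (by positivity)]
    linarith
  have h2 : ((a : ℝ) + b) ^ 2 / (32 * m ^ 2 * dist v w) ≤ 1 / 8 := by
    rw [div_le_iff₀ (by positivity)]
    nlinarith [sq_nonneg ((a : ℝ) + b), mul_le_mul_of_nonneg_left hvw1 (sq_nonneg (m : ℝ))]
  linarith

theorem one_le_dist_progressionPt {d m : ℕ} (hm : 0 < m) {S : Finset (Pt d)}
    (hS : Separated S) {u : Pt d → Pt d} (hu : IsFlatNormal S u (32 * m)⁻¹)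
    {x y : Pt d × ℕ} (hx : x ∈ S ×ˢ Finset.range m) (hy : y ∈ S ×ˢ Finset.range m)
    (hxy : x ≠ y) :
    1 ≤ dist (progressionPt u (32 * m ^ 2) x) (progressionPt u (32 * m ^ 2) y) := by
  obtain ⟨v, a⟩ := x
  obtain ⟨w, b⟩ := y
  simp only [Finset.mem_product, Finset.mem_range] at hx hy
  by_cases hvw : v = w
  · subst hvw
    have hab : (a : ℤ) - b ≠ 0 := sub_ne_zero.2 (by exact_mod_cast fun h => hxy (by rw [h]))
    rw [dist_progressionPt_of_fst_eq _ (hu v hx.1).1]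
    exact_mod_cast Int.one_le_abs hab
  · have hm1 : (1 : ℝ) ≤ m := by exact_mod_cast hm
    have hclose := abs_le.1
      (abs_dist_progressionPt_sub_le_quarter hm hS hu hx.1 hy.1 hvw hx.2 hy.2)
    nlinarith [hS v hx.1 w hy.1 hvw]

theorem exists_near_progressionPt_iff {k d m : ℕ} (hm : 0 < m) {S : Finset (Pt d)}
    (hS : Separated S) {u : Pt d → Pt d} (hu : IsFlatNormal S u (32 * m)⁻¹) {t : ℕ → ℝ}
    (ht : ∀ i < k, 1 ≤ t i)
    (hnear : ∀ p ∈ S, ∀ q ∈ S, p ≠ q →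
      ∃ i < k, dist p q ∈ Set.Icc (t i) (t i + (64 * (m : ℝ) ^ 2)⁻¹))
    {x y : Pt d × ℕ} (hx : x ∈ S ×ˢ Finset.range m) (hy : y ∈ S ×ˢ Finset.range m) :
    (∃ i < k, dist (progressionPt u (32 * m ^ 2) x) (progressionPt u (32 * m ^ 2) y) ∈
        Set.Icc (32 * m ^ 2 * t i - 1 / 4) (32 * m ^ 2 * t i - 1 / 4 + 1)) ↔ x.1 ≠ y.1 := by
  obtain ⟨v, a⟩ := x
  obtain ⟨w, b⟩ := y
  simp only [Finset.mem_product, Finset.mem_range] at hx hy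
  have hm1 : (1 : ℝ) ≤ m := by exact_mod_cast hm
  constructor
  · rintro ⟨i, hi, hlow, -⟩ (rfl : v = w)
    rw [dist_progressionPt_of_fst_eq _ (hu v hx.1).1] at hlow
    have ha : (a : ℝ) < m := by exact_mod_cast hx.2
    have hb : (b : ℝ) < m := by exact_mod_cast hy.2
    have hab : |(a : ℝ) - b| < m := abs_sub_lt_iff.2 ⟨by linarith, by linarith⟩
    nlinarith [ht i hi]
  · intro hvw
    obtain ⟨i, hi, hlow, hhigh⟩ := hnear v hx.1 w hy.1 hvw
    have hclose := abs_le.1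
      (abs_dist_progressionPt_sub_le_quarter hm hS hu hx.1 hy.1 hvw hx.2 hy.2)
    have hscale : 32 * (m : ℝ) ^ 2 * (64 * (m : ℝ) ^ 2)⁻¹ = 1 / 2 := by field_simp; norm_num
    refine ⟨i, hi, by nlinarith, ?_⟩
    nlinarith

theorem injOn_progressionPt {d m : ℕ} (hm : 0 < m) {S : Finset (Pt d)} (hS : Separated S)
    {u : Pt d → Pt d} (hu : IsFlatNormal S u (32 * m)⁻¹) :
    Set.InjOn (progressionPt u (32 * m ^ 2)) (↑(S ×ˢ Finset.range m) : Set (Pt d × ℕ)) := by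
  intro x hx y hy hxy
  by_contra hne
  have := one_le_dist_progressionPt hm hS hu hx hy hne
  rw [hxy, dist_self] at this
  norm_num at this

theorem card_nearPairs_image_progressionPt {k d m : ℕ} (hm : 0 < m) {S : Finset (Pt d)}
    (hS : Separated S) {u : Pt d → Pt d} (hu : IsFlatNormal S u (32 * m)⁻¹) {t : ℕ → ℝ}
    (ht : ∀ i < k, 1 ≤ t i)
    (hnear : ∀ p ∈ S, ∀ q ∈ S, p ≠ q →
      ∃ i < k, dist p q ∈ Set.Icc (t i) (t i + (64 * (m : ℝ) ^ 2)⁻¹)) :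
    (nearPairs ((S ×ˢ Finset.range m).image (progressionPt u (32 * m ^ 2))) k 1
      (fun i => 32 * m ^ 2 * t i - 1 / 4)).card = (S.card * S.card - S.card) * (m * m) := by
  set P := progressionPt u (32 * m ^ 2)
  set A := S ×ˢ Finset.range m
  have hinj : Set.InjOn P A := injOn_progressionPt hm hS hu
  have hiff := fun {x y} (hx : x ∈ A) (hy : y ∈ A) =>
    exists_near_progressionPt_iff hm hS hu ht hnear hx hy
  have hmemA : ∀ {v a}, v ∈ S → a < m → (v, a) ∈ A :=
    fun hv ha => Finset.mem_product.2 ⟨hv, Finset.mem_range.2 ha⟩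
  calc _ = (S.offDiag ×ˢ (Finset.range m ×ˢ Finset.range m)).card := by
        refine (Finset.card_nbij (fun q => (P (q.1.1, q.2.1), P (q.1.2, q.2.2))) ?_ ?_ ?_).symm
        · rintro ⟨⟨v, w⟩, a, b⟩ hq
          simp only [Finset.mem_coe, Finset.mem_product, Finset.mem_offDiag,
            Finset.mem_range] at hq
          obtain ⟨⟨hv, hw, hvw⟩, ha, hb⟩ := hq
          simp only [Finset.mem_coe, nearPairs, Finset.mem_filter, Finset.mem_offDiag]
          exact ⟨⟨Finset.mem_image_of_mem P (hmemA hv ha), Finset.mem_image_of_mem P (hmemA hw hb),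
            hinj.ne (hmemA hv ha) (hmemA hw hb) (by simp [hvw])⟩,
            (hiff (hmemA hv ha) (hmemA hw hb)).2 hvw⟩
        · rintro ⟨⟨v, w⟩, a, b⟩ hq ⟨⟨v', w'⟩, a', b'⟩ hq' h
          simp only [Finset.mem_coe, Finset.mem_product, Finset.mem_offDiag,
            Finset.mem_range] at hq hq'
          simp only [Prod.mk.injEq] at h
          have h1 := hinj (hmemA hq.1.1 hq.2.1) (hmemA hq'.1.1 hq'.2.1) h.1
          have h2 := hinj (hmemA hq.1.2.1 hq.2.2) (hmemA hq'.1.2.1 hq'.2.2) h.2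
          simp only [Prod.mk.injEq] at h1 h2
          simp [h1, h2]
        · rintro ⟨p, q⟩ hpq
          simp only [nearPairs, Finset.coe_filter, Finset.mem_offDiag, Set.mem_ofPred_eq] at hpq
          obtain ⟨⟨hp, hq, -⟩, hnearpq⟩ := hpq
          obtain ⟨x, hx, rfl⟩ := Finset.mem_image.1 hp
          obtain ⟨y, hy, rfl⟩ := Finset.mem_image.1 hq
          have hxy := (hiff hx hy).1 hnearpq
          simp only [A, Finset.mem_product, Finset.mem_range] at hx hy
          exact ⟨((x.1, y.1), (x.2, y.2)), by simp [hx, hy, hxy], rfl⟩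
    _ = (S.card * S.card - S.card) * (m * m) := by
        rw [Finset.card_product, Finset.card_product, Finset.offDiag_card, Finset.card_range]

theorem exists_progressions {k d m : ℕ} (hm : 0 < m) {S : Finset (Pt d)}
    (hS : IsNearlyKDist k (64 * (m : ℝ) ^ 2)⁻¹ S) {u : Pt d → Pt d}
    (hu : IsFlatNormal S u (32 * m)⁻¹) :
    ∃ (T : Finset (Pt d)) (t : ℕ → ℝ), T.card = S.card * m ∧ Separated T ∧
      (∀ i < k, 1 ≤ t i) ∧ (nearPairs T k 1 t).card = (S.card * S.card - S.card) * (m * m) := by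
  obtain ⟨hsep, t, ht, hnear⟩ := hS
  have hinj := injOn_progressionPt hm hsep hu
  refine ⟨(S ×ˢ Finset.range m).image (progressionPt u (32 * m ^ 2)),
    fun i => 32 * m ^ 2 * t i - 1 / 4, ?_, ?_, ?_, ?_⟩
  · rw [Finset.card_image_of_injOn hinj, Finset.card_product, Finset.card_range]
  · rintro _ hp _ hq hpq
    obtain ⟨x, hx, rfl⟩ := Finset.mem_image.1 hp
    obtain ⟨y, hy, rfl⟩ := Finset.mem_image.1 hq
    exact one_le_dist_progressionPt hm hsep hu hx hy (by rintro rfl; exact hpq rfl)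
  · intro i hi
    have hm1 : (1 : ℝ) ≤ m := by exact_mod_cast hm
    nlinarith [ht i hi]
  · exact card_nearPairs_image_progressionPt hm hsep hu ht hnear

theorem two_mul_turanNum_mul (s m : ℕ) : 2 * turanNum (s * m) s = (s * s - s) * (m * m) := by
  rcases s.eq_zero_or_pos with rfl | hs
  · simp [turanNum]
  have hsplit : (s * m).choose 2 = s * m.choose 2 + s.choose 2 * (m * m) := by
    have : ((s * m).choose 2 : ℚ) = s * m.choose 2 + s.choose 2 * (m * m) := by
      simp only [Nat.cast_choose_two, Nat.cast_mul]
      ring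
    exact_mod_cast this
  have htwo : 2 * s.choose 2 = s * s - s := by
    rw [Nat.choose_two_right, Nat.mul_div_cancel' (Nat.even_mul_pred_self s).two_dvd,
      Nat.mul_sub_one]
  rw [turanNum, Nat.mul_mod_right, Nat.mul_div_cancel_left m hs, hsplit]
  simp only [zero_mul, zero_add, Nat.sub_zero, Nat.add_sub_cancel_left]
  rw [← htwo, Nat.mul_assoc]

theorem le_mkdn {k d M : ℕ} {S : Finset (Pt d)} {t : ℕ → ℝ} (hS : Separated S)
    (ht : ∀ i < k, 1 ≤ t i) (hM : (nearPairs S k 1 t).card = 2 * M) : M ≤ Mkdn k d S.card := by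
  refine le_csSup ⟨S.card * S.card, ?_⟩ ⟨S, t, rfl, hS, ht, hM⟩
  rintro M' ⟨S', t', hcard, -, -, hM'⟩
  have hle : (nearPairs S' k 1 t').card ≤ S'.card * S'.card :=
    (Finset.card_filter_le _ _).trans (Finset.offDiag_card S' ▸ Nat.sub_le _ _)
  rw [hM', hcard] at hle
  omega

theorem Nat.sSup_mem_of_pos {s : Set ℕ} (h : 0 < sSup s) : sSup s ∈ s := by
  refine Nat.sSup_mem (Set.nonempty_iff_ne_empty.2 ?_) ?_
  · rintro rfl
    simp at h
  · by_contra hs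
    rw [Nat.sSup_of_not_bddAbove hs] at h
    exact h.false

theorem stmt18_general (k d n : ℕ) (hd : 2 ≤ d)
    (hdvd : Nflat k d (d - 1) ∣ n) :
    turanNum n (Nflat k d (d - 1)) ≤ Mkdn k d n := by
  obtain ⟨m, rfl⟩ := hdvd
  set N := Nflat k d (d - 1)
  rcases (N * m).eq_zero_or_pos with h0 | hpos
  · simp [h0, turanNum]
  have hN : 0 < N := Nat.pos_of_mul_pos_right hpos
  have hm : 0 < m := Nat.pos_of_mul_pos_left hpos
  obtain ⟨S, hcard, hnear, hflat⟩ := Nat.sSup_mem_of_pos hN (64 * (m : ℝ) ^ 2)⁻¹ (32 * (m : ℝ))⁻¹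
    (by positivity) (by positivity)
  change S.card = N at hcard
  choose! u hu using fun v hv => (hflat v hv).exists_unit_normal (by omega) (by omega)
  obtain ⟨T, t, hT, hsep, ht, hnp⟩ := exists_progressions hm hnear hu
  rw [hcard] at hT hnp
  have := le_mkdn (d := d) hsep ht (M := turanNum (N * m) N) (by rw [hnp, two_mul_turanNum_mul])
  rwa [hT] at this

theorem stmt18 (k d n : ℕ) (hk : 1 ≤ k) (hd : 2 ≤ d)
    (hdvd : Nflat k d (d - 1) ∣ n) :
    turanNum n (Nflat k d (d - 1)) ≤ Mkdn k d n :=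
  stmt18_general k d n hd hdvd

end
end
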